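/- For every n > 1, the matrix algebra Mₙ(ℂ) is not symmetrically square-zero determined: the symmetric bilinear map V(a,b) = tr(a)tr(b) satisfies V(a,a) = 0 whenever a² = 0, yet there is no linear map T : Mₙ(ℂ) → ℂ with V(a,b) = T(ab+ba) for all a,b. -/

import Mathlib

/-! The trace of a square-zero matrix is nilpotent, hence zero over a reduced ring, so `tr(a)²`
vanishes whenever `a² = 0`. On the other hand two distinct diagonal matrix units `e = Eᵢᵢ`,
`f = Eⱼⱼ` satisfy `e ∘ f = 0` while `tr e · tr f = 1`, so `tr(a) tr(b)` cannot factor through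
the Jordan product `a ∘ b` via a linear map. -/

namespace Matrix

variable {ι R : Type*} [Fintype ι] [DecidableEq ι] [CommRing R]

theorem trace_eq_zero_of_mul_self_eq_zero [IsReduced R] {a : Matrix ι ι R} (ha : a * a = 0) :
    a.trace = 0 :=
  (isNilpotent_trace_of_isNilpotent ⟨2, by rwa [sq]⟩).eq_zero

theorem single_one_mul_add_mul_single_one_of_ne {i j : ι} (hij : i ≠ j) :
    single i i (1 : R) * single j j 1 + single j j 1 * single i i 1 = 0 := by
  rw [single_mul_single_of_ne _ _ _ _ hij, single_mul_single_of_ne _ _ _ _ hij.symm, add_zero]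

theorem not_exists_linearMap_trace_mul_trace_eq_jordan [Nontrivial ι] [Nontrivial R] :
    ¬ ∃ T : Matrix ι ι R →ₗ[R] R, ∀ a b, a.trace * b.trace = T (a * b + b * a) := by
  rintro ⟨T, hT⟩
  obtain ⟨i, j, hij⟩ := exists_pair_ne ι
  have h := hT (single i i 1) (single j j 1)
  rw [trace_single_eq_same, trace_single_eq_same, single_one_mul_add_mul_single_one_of_ne hij,
    map_zero, mul_one] at h
  exact one_ne_zero h

end Matrix

theorem stmt_8 (n : ℕ) (hn : 1 < n) :
    (∀ a : Matrix (Fin n) (Fin n) ℂ, a * a = 0 → a.trace * a.trace = 0) ∧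
    ¬ ∃ T : Matrix (Fin n) (Fin n) ℂ →ₗ[ℂ] ℂ,
        ∀ a b : Matrix (Fin n) (Fin n) ℂ,
          a.trace * b.trace = T (a * b + b * a) := by
  have : Nontrivial (Fin n) := Fin.nontrivial_iff_two_le.mpr hn
  refine ⟨fun a ha => ?_, Matrix.not_exists_linearMap_trace_mul_trace_eq_jordan⟩
  rw [Matrix.trace_eq_zero_of_mul_self_eq_zero ha, mul_zero]
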